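/- If E ⊆ A ⊆ ℝ and A is I-sparse at x ∈ ℝ, then E is I-sparse at x; that is, S_I(x) is closed under taking subsets. -/

import Mathlib

open MeasureTheory Filter Set
open scoped ENNReal

noncomputable section

/-- A nontrivial admissible ideal of subsets of ℕ: closed under subsets and
finite unions, contains every finite set, and does not contain ℕ itself. -/
structure AdmissibleIdeal : Type where
  carrier : Set (Set ℕ)
  subset_mem : ∀ ⦃A B : Set ℕ⦄, A ∈ carrier → B ⊆ A → B ∈ carrier
  union_mem : ∀ ⦃A B : Set ℕ⦄, A ∈ carrier → B ∈ carrier → A ∪ B ∈ carrier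
  finite_mem : ∀ A : Set ℕ, A.Finite → A ∈ carrier
  univ_not_mem : (Set.univ : Set ℕ) ∉ carrier

/-- The filter F(I) = {M ⊆ ℕ : ℕ \ M ∈ I} associated with the ideal I. -/
def AdmissibleIdeal.filter (I : AdmissibleIdeal) : Filter ℕ :=
  Filter.comk (· ∈ I.carrier) (I.finite_mem ∅ Set.finite_empty)
    (fun _t ht _s hs => I.subset_mem ht hs)
    (fun _s hs _t ht => I.union_mem hs ht)

/-- A sequence of closed intervals admissible about the point `p`:
each `J n` is a closed interval containing `p`, and
`{n : 0 < λ(J n) < 1/n} ∈ F(I)`. -/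
def AdmissibleSeq (I : AdmissibleIdeal) (p : ℝ) (J : ℕ → Set ℝ) : Prop :=
  (∀ n, ∃ a b : ℝ, a ≤ b ∧ J n = Set.Icc a b) ∧ (∀ n, p ∈ J n) ∧
    {n : ℕ | 0 < volume (J n) ∧ volume (J n) < (n : ℝ≥0∞)⁻¹} ∈ I.filter

/-- The sequence n ↦ λ(E ∩ J n)/λ(J n) (interpreted as 0 when λ(J n) = 0). -/
def ratioSeq (E : Set ℝ) (J : ℕ → Set ℝ) : ℕ → ℝ :=
  fun n => (volume (E ∩ J n) / volume (J n)).toReal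

/-- Upper I-density of `E` at `p`: sup over admissible sequences of the
limsup along `F(I)` of the measure ratios. -/
def upperIDensity (I : AdmissibleIdeal) (p : ℝ) (E : Set ℝ) : ℝ :=
  sSup {l : ℝ | ∃ J : ℕ → Set ℝ, AdmissibleSeq I p J ∧
    l = Filter.limsup (ratioSeq E J) I.filter}

/-- Lower I-density of `E` at `p`: inf over admissible sequences of the
liminf along `F(I)` of the measure ratios. -/
def lowerIDensity (I : AdmissibleIdeal) (p : ℝ) (E : Set ℝ) : ℝ :=
  sInf {l : ℝ | ∃ J : ℕ → Set ℝ, AdmissibleSeq I p J ∧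
    l = Filter.liminf (ratioSeq E J) I.filter}

/-- `C` is a measurable cover of `A`. -/
def IsMeasurableCover (C A : Set ℝ) : Prop :=
  MeasurableSet C ∧ A ⊆ C ∧
    ∀ F : Set ℝ, MeasurableSet F → F ⊆ C \ A → volume F = 0

/-- `A` is I-sparse at `x`, i.e. `A ∈ S_I(x)`. -/
def ISparseAt (I : AdmissibleIdeal) (A : Set ℝ) (x : ℝ) : Prop :=
  ∀ B : Set ℝ, MeasurableSet B → upperIDensity I x B < 1 →
    ∀ C : Set ℝ, IsMeasurableCover C A → upperIDensity I x (C ∪ B) < 1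

/-- The I-density topology T_I. -/
def IDensityTopology (I : AdmissibleIdeal) : Set (Set ℝ) :=
  {E | MeasurableSet E ∧ ∀ x ∈ E, lowerIDensity I x E = 1}

/-- The I-sparse set topology 𝒰. -/
def sparseTop (I : AdmissibleIdeal) : Set (Set ℝ) :=
  {E | ∀ x ∈ E, ISparseAt I Eᶜ x}

/-! A measurable cover `C` of `E ⊆ A`, enlarged by a measurable hull of `A \ C`, is a measurable
cover of `A`; since upper I-density is monotone, sparseness of `A` bounds the density of `C ∪ B`. -/

instance AdmissibleIdeal.filter_neBot (I : AdmissibleIdeal) : I.filter.NeBot := by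
  refine ⟨fun h => I.univ_not_mem ?_⟩
  have : (∅ : Set ℕ) ∈ I.filter := h ▸ mem_bot
  simpa [AdmissibleIdeal.filter, mem_comk] using this

section ratioSeq

variable (J : ℕ → Set ℝ)

lemma ratioSeq_nonneg (E : Set ℝ) (n : ℕ) : 0 ≤ ratioSeq E J n :=
  ENNReal.toReal_nonneg

lemma volume_inter_div_volume_le_one (E : Set ℝ) (n : ℕ) :
    volume (E ∩ J n) / volume (J n) ≤ 1 :=
  ENNReal.div_le_of_le_mul (by simpa using measure_mono inter_subset_right)

lemma ratioSeq_le_one (E : Set ℝ) (n : ℕ) : ratioSeq E J n ≤ 1 :=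
  ENNReal.toReal_le_of_le_ofReal zero_le_one
    (by simpa using volume_inter_div_volume_le_one J E n)

lemma ratioSeq_mono {S T : Set ℝ} (hST : S ⊆ T) (n : ℕ) :
    ratioSeq S J n ≤ ratioSeq T J n :=
  ENNReal.toReal_mono
    (ne_top_of_le_ne_top ENNReal.one_ne_top (volume_inter_div_volume_le_one J T n))
    (ENNReal.div_le_div_right (measure_mono (inter_subset_inter_left _ hST)) _)

variable {l : Filter ℕ} [l.NeBot]

lemma limsup_ratioSeq_le_one (E : Set ℝ) : limsup (ratioSeq E J) l ≤ 1 :=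
  limsup_le_of_le (isCoboundedUnder_le_of_le l (ratioSeq_nonneg J E))
    (Eventually.of_forall (ratioSeq_le_one J E))

lemma limsup_ratioSeq_mono {S T : Set ℝ} (hST : S ⊆ T) :
    limsup (ratioSeq S J) l ≤ limsup (ratioSeq T J) l :=
  limsup_le_limsup (Eventually.of_forall (ratioSeq_mono J hST))
    (isCoboundedUnder_le_of_le l (ratioSeq_nonneg J S))
    (isBoundedUnder_of ⟨1, ratioSeq_le_one J T⟩)

end ratioSeq

lemma admissibleSeq_Icc_add_inv (I : AdmissibleIdeal) (p : ℝ) :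
    AdmissibleSeq I p (fun n => Icc p (p + ((n : ℝ) + 1)⁻¹)) := by
  have hpos (n : ℕ) : (0 : ℝ) < ((n : ℝ) + 1)⁻¹ := by positivity
  have hvol (n : ℕ) : volume (Icc p (p + ((n : ℝ) + 1)⁻¹)) = ((n : ℝ≥0∞) + 1)⁻¹ := by
    rw [Real.volume_Icc, add_sub_cancel_left, ENNReal.ofReal_inv_of_pos (by positivity)]
    norm_cast
  refine ⟨fun n => ⟨_, _, by linarith [hpos n], rfl⟩, fun n => ⟨le_rfl, by linarith [hpos n]⟩, ?_⟩
  refine univ_mem' fun n => ?_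
  simp only [mem_ofPred_eq, hvol, ENNReal.inv_pos, ENNReal.inv_lt_inv]
  exact ⟨ENNReal.add_ne_top.2 ⟨ENNReal.natCast_ne_top n, ENNReal.one_ne_top⟩,
    ENNReal.lt_add_right (ENNReal.natCast_ne_top n) one_ne_zero⟩

lemma upperIDensity_mono (I : AdmissibleIdeal) (p : ℝ) {S T : Set ℝ} (hST : S ⊆ T) :
    upperIDensity I p S ≤ upperIDensity I p T := by
  have hbdd : BddAbove {l : ℝ | ∃ J, AdmissibleSeq I p J ∧ l = limsup (ratioSeq T J) I.filter} := by
    refine ⟨1, ?_⟩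
    rintro _ ⟨J, -, rfl⟩
    exact limsup_ratioSeq_le_one J T
  refine csSup_le ⟨_, _, admissibleSeq_Icc_add_inv I p, rfl⟩ ?_
  rintro _ ⟨J, hJ, rfl⟩
  exact le_csSup_of_le hbdd ⟨J, hJ, rfl⟩ (limsup_ratioSeq_mono J hST)

lemma IsMeasurableCover.union_toMeasurable_sdiff {C A E : Set ℝ} (hC : IsMeasurableCover C E)
    (hEA : E ⊆ A) : IsMeasurableCover (C ∪ toMeasurable volume (A \ C)) A := by
  obtain ⟨hCm, -, hCnull⟩ := hC
  refine ⟨hCm.union (measurableSet_toMeasurable _ _),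
    fun a ha => (em (a ∈ C)).imp id fun h => subset_toMeasurable _ _ ⟨ha, h⟩, ?_⟩
  intro F hF hFsub
  have hFA : ∀ a ∈ F, a ∉ A := fun a ha => (hFsub ha).2
  have hin : volume (F ∩ C) = 0 :=
    hCnull _ (hF.inter hCm) fun a ha => ⟨ha.2, fun haE => hFA a ha.1 (hEA haE)⟩
  have hout : volume (F \ C) = 0 := by
    have hhull : toMeasurable volume (A \ C) ∩ (F \ C) = F \ C :=
      inter_eq_right.2 fun a ha => ((hFsub ha.1).1.resolve_left ha.2)
    have hmiss : (A \ C) ∩ (F \ C) = ∅ :=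
      eq_empty_of_forall_notMem fun a ha => hFA a ha.2.1 ha.1.1
    rw [← hhull, Measure.measure_toMeasurable_inter_of_sFinite (hF.diff hCm), hmiss, measure_empty]
  rw [← measure_inter_add_sdiff F hCm, hin, hout, add_zero]

/-- S_I(x) is closed under taking subsets. -/
theorem iSparseAt_subset (I : AdmissibleIdeal) (A E : Set ℝ) (x : ℝ)
    (hEA : E ⊆ A) (hA : ISparseAt I A x) :
    ISparseAt I E x := by
  intro B hB hBd C hC
  calc upperIDensity I x (C ∪ B)
      ≤ upperIDensity I x ((C ∪ toMeasurable volume (A \ C)) ∪ B) :=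
        upperIDensity_mono I x (union_subset_union_left _ subset_union_left)
    _ < 1 := hA B hB hBd _ (hC.union_toMeasurable_sdiff hEA)
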